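/- For every prime power q and generator θ of GF(q²)*, and any subset K ⊆ GF(q) \ {0}, the union over k ∈ K of the Bose sets B(k) = {a : 1 ≤ a ≤ q²−1, θ^a − kθ ∈ GF(q)} is a B_2[|K|²] set modulo q²−1, i.e., every residue mod q²−1 has at most 2|K|² ordered representations as a sum of two elements; hence C_2(2k², q²−1) ≥ k·q for every k ≤ q−1. -/
import Mathlib

lemma aux_charP (p n q : ℕ) (hp : p.Prime) (hn : 0 < n) (hq : q = p ^ n)
    (F : Type*) [Field F] [Fintype F] (hF : Fintype.card F = q ^ 2) : CharP F p := by
  have h0 : (Fintype.card F : F) = 0 := FiniteField.cast_card_eq_zero F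
  rw [hF, hq, ← pow_mul] at h0
  push_cast at h0
  have hp0 : (p : F) = 0 := pow_eq_zero_iff (by positivity) |>.mp h0
  have hdvd : ringChar F ∣ p := ringChar.dvd hp0
  haveI := ringChar.charP F
  have hprime : (ringChar F).Prime := CharP.char_is_prime F (ringChar F)
  have : ringChar F = p := (Nat.prime_dvd_prime_iff_eq hprime hp).mp hdvd
  exact this ▸ ringChar.charP F

lemma theta_pow_inj (q : ℕ) (hq2 : 2 ≤ q) {F : Type*} [Field F] [Fintype F] {θ : F}
    (hθ : orderOf θ = q ^ 2 - 1) :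
    ∀ a ∈ Finset.Icc 1 (q ^ 2 - 1), ∀ b ∈ Finset.Icc 1 (q ^ 2 - 1), θ ^ a = θ ^ b → a = b := by
  have hq4 : 4 ≤ q ^ 2 := by nlinarith
  have hm3 : 3 ≤ q ^ 2 - 1 := by omega
  intro a ha b hb hab
  simp only [Finset.mem_Icc] at ha hb
  have h1 : θ ^ (a % (q ^ 2 - 1)) = θ ^ (b % (q ^ 2 - 1)) := by
    rw [← hθ, pow_mod_orderOf, pow_mod_orderOf, hab]
  have h2 : a % (q ^ 2 - 1) = b % (q ^ 2 - 1) := by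
    refine pow_injOn_Iio_orderOf ?_ ?_ h1 <;>
      simp [hθ, Set.mem_Iio, Nat.mod_lt _ (by omega : 0 < q ^ 2 - 1)]
  rcases Nat.lt_or_ge a (q ^ 2 - 1) with h | h
  · rcases Nat.lt_or_ge b (q ^ 2 - 1) with h' | h'
    · rwa [Nat.mod_eq_of_lt h, Nat.mod_eq_of_lt h'] at h2
    · have hb' : b = q ^ 2 - 1 := by omega
      rw [Nat.mod_eq_of_lt h, hb', Nat.mod_self] at h2; omega
  · have ha' : a = q ^ 2 - 1 := by omega
    rcases Nat.lt_or_ge b (q ^ 2 - 1) with h' | h'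
    · rw [ha', Nat.mod_self, Nat.mod_eq_of_lt h'] at h2; omega
    · have hb' : b = q ^ 2 - 1 := by omega
      omega

lemma cast_inj_Icc (m : ℕ) (hm : 0 < m) :
    ∀ a ∈ Finset.Icc 1 m, ∀ b ∈ Finset.Icc 1 m, (a : ZMod m) = (b : ZMod m) → a = b := by
  haveI : NeZero m := ⟨by omega⟩
  intro a ha b hb hab
  simp only [Finset.mem_Icc] at ha hb
  have h2 : a % m = b % m := by
    rw [← ZMod.val_natCast, ← ZMod.val_natCast, hab]
  rcases Nat.lt_or_ge a m with h | h
  · rcases Nat.lt_or_ge b m with h' | h'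
    · rwa [Nat.mod_eq_of_lt h, Nat.mod_eq_of_lt h'] at h2
    · have : b = m := by omega
      rw [Nat.mod_eq_of_lt h, this, Nat.mod_self] at h2; omega
  · have : a = m := by omega
    rcases Nat.lt_or_ge b m with h' | h'
    · rw [this, Nat.mod_self, Nat.mod_eq_of_lt h'] at h2; omega
    · omega

lemma theta_basics (q : ℕ) (hq2 : 2 ≤ q) {F : Type*} [Field F] [Fintype F] {θ : F}
    (hθ : orderOf θ = q ^ 2 - 1) :
    θ ^ (q ^ 2 - 1) = 1 ∧ θ ≠ 0 ∧ θ ^ q ≠ θ := by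
  have hq4 : 4 ≤ q ^ 2 := by nlinarith
  have h1 : θ ^ (q ^ 2 - 1) = 1 := by rw [← hθ]; exact pow_orderOf_eq_one θ
  have h0 : θ ≠ 0 := by
    intro h
    rw [h, zero_pow (by omega : q ^ 2 - 1 ≠ 0)] at h1
    exact zero_ne_one h1
  refine ⟨h1, h0, ?_⟩
  intro h
  have : θ ^ (q - 1) = 1 := by
    have hq1 : q = (q - 1) + 1 := by omega
    have := h
    rw [hq1, pow_succ] at this
    exact mul_right_cancel₀ h0 (by rw [this, one_mul])
  have := orderOf_dvd_of_pow_eq_one this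
  rw [hθ] at this
  have h2 := Nat.le_of_dvd (by omega) this
  have : q < q ^ 2 := by nlinarith
  omega

-- closure of the set {x : x^q = x}
lemma fix_sub (p n q : ℕ) (hp : p.Prime) (hn : 0 < n) (hq : q = p ^ n)
    {F : Type*} [Field F] [Fintype F] (hF : Fintype.card F = q ^ 2)
    {x y : F} (hx : x ^ q = x) (hy : y ^ q = y) : (x - y) ^ q = x - y := by
  haveI := aux_charP p n q hp hn hq F hF
  haveI : Fact p.Prime := ⟨hp⟩
  rw [hq] at hx hy ⊢
  rw [sub_pow_char_pow, hx, hy]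

lemma fix_add (p n q : ℕ) (hp : p.Prime) (hn : 0 < n) (hq : q = p ^ n)
    {F : Type*} [Field F] [Fintype F] (hF : Fintype.card F = q ^ 2)
    {x y : F} (hx : x ^ q = x) (hy : y ^ q = y) : (x + y) ^ q = x + y := by
  haveI := aux_charP p n q hp hn hq F hF
  haveI : Fact p.Prime := ⟨hp⟩
  rw [hq] at hx hy ⊢
  rw [add_pow_char_pow, hx, hy]

lemma fix_mul (q : ℕ) {F : Type*} [Field F]
    {x y : F} (hx : x ^ q = x) (hy : y ^ q = y) : (x * y) ^ q = x * y := by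
  rw [mul_pow, hx, hy]

lemma fix_inv (q : ℕ) {F : Type*} [Field F]
    {x : F} (hx : x ^ q = x) : (x⁻¹) ^ q = x⁻¹ := by
  rw [inv_pow, hx]

/-- Uniqueness of coordinates in the basis `{1, θ}` over the subfield. -/
lemma basis_unique (p n q : ℕ) (hp : p.Prime) (hn : 0 < n) (hq : q = p ^ n)
    {F : Type*} [Field F] [Fintype F] (hF : Fintype.card F = q ^ 2)
    {θ : F} (hθq : θ ^ q ≠ θ)
    {u v u' v' : F} (hu : u ^ q = u) (hv : v ^ q = v) (hu' : u' ^ q = u') (hv' : v' ^ q = v')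
    (h : u * θ + v = u' * θ + v') : u = u' ∧ v = v' := by
  by_cases huu : u = u'
  · constructor
    · exact huu
    · have := h
      rw [huu] at this
      exact add_left_cancel this
  · exfalso
    have hne : u - u' ≠ 0 := sub_ne_zero.mpr huu
    have hθeq : θ = (v' - v) * (u - u')⁻¹ := by
      field_simp
      linear_combination h
    apply hθq
    rw [hθeq]
    exact fix_mul q (fix_sub p n q hp hn hq hF hv' hv)
      (fix_inv q (fix_sub p n q hp hn hq hF hu hu'))
set_option maxHeartbeats 1000000 in
lemma bose_B2 (p n q : ℕ) (hp : p.Prime) (hn : 0 < n) (hq : q = p ^ n)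
    (F : Type*) [Field F] [Fintype F] [DecidableEq F] (hF : Fintype.card F = q ^ 2)
    (θ : F) (hθ : orderOf θ = q ^ 2 - 1)
    (K : Finset F) (hK : ∀ k ∈ K, k ^ q = k ∧ k ≠ 0)
    (U : Finset ℕ)
    (hUdef : U = K.biUnion fun k =>
      (Finset.Icc 1 (q ^ 2 - 1)).filter fun a => (θ ^ a - k * θ) ^ q = θ ^ a - k * θ)
    (c : ZMod (q ^ 2 - 1)) :
    ((U ×ˢ U).filter
      (fun pr => ((pr.1 : ZMod (q ^ 2 - 1)) + (pr.2 : ZMod (q ^ 2 - 1)) = c))).card ≤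
      2 * K.card ^ 2 := by
  classical
  have hq2 : 2 ≤ q := by
    rw [hq]
    calc 2 ≤ p := hp.two_le
    _ ≤ p ^ n := Nat.le_self_pow (by omega) p
  have hq4 : 4 ≤ q ^ 2 := by nlinarith
  obtain ⟨hθm, hθ0, hθq⟩ := theta_basics q hq2 hθ
  have hinj := theta_pow_inj q hq2 hθ
  haveI : NeZero (q ^ 2 - 1) := ⟨by omega⟩
  set f : ℕ → F := fun a =>
    if h : (K.filter (fun k => (θ ^ a - k * θ) ^ q = θ ^ a - k * θ)).Nonempty
    then h.choose else 0 with hf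
  have hfspec : ∀ a ∈ U, f a ∈ K ∧ (θ ^ a - f a * θ) ^ q = θ ^ a - f a * θ := by
    intro a ha
    rw [hUdef] at ha
    simp only [Finset.mem_biUnion, Finset.mem_filter] at ha
    obtain ⟨k, hk, _, hprop⟩ := ha
    have hne : (K.filter (fun k => (θ ^ a - k * θ) ^ q = θ ^ a - k * θ)).Nonempty :=
      ⟨k, Finset.mem_filter.mpr ⟨hk, hprop⟩⟩
    have hmem := hne.choose_spec
    rw [Finset.mem_filter] at hmem
    simp only [hf, dif_pos hne]
    exact hmem
  have hUIcc : ∀ a ∈ U, a ∈ Finset.Icc 1 (q ^ 2 - 1) := by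
    intro a ha
    rw [hUdef] at ha
    simp only [Finset.mem_biUnion, Finset.mem_filter] at ha
    obtain ⟨k, _, h, _⟩ := ha
    exact h
  set S := (U ×ˢ U).filter
      (fun pr => ((pr.1 : ZMod (q ^ 2 - 1)) + (pr.2 : ZMod (q ^ 2 - 1)) = c)) with hS
  have key : ∀ pr ∈ S, pr.1 ∈ Finset.Icc 1 (q ^ 2 - 1) ∧ pr.2 ∈ Finset.Icc 1 (q ^ 2 - 1) ∧
      f pr.1 ∈ K ∧ f pr.2 ∈ K ∧
      (θ ^ pr.1 - f pr.1 * θ) ^ q = θ ^ pr.1 - f pr.1 * θ ∧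
      (θ ^ pr.2 - f pr.2 * θ) ^ q = θ ^ pr.2 - f pr.2 * θ ∧
      θ ^ pr.1 * θ ^ pr.2 = θ ^ c.val ∧
      ((pr.1 : ZMod (q ^ 2 - 1)) + (pr.2 : ZMod (q ^ 2 - 1)) = c) := by
    intro pr hpr
    rw [hS, Finset.mem_filter, Finset.mem_product] at hpr
    obtain ⟨⟨hU1, hU2⟩, hsum⟩ := hpr
    obtain ⟨hk1K, hk1prop⟩ := hfspec _ hU1
    obtain ⟨hk2K, hk2prop⟩ := hfspec _ hU2
    refine ⟨hUIcc _ hU1, hUIcc _ hU2, hk1K, hk2K, hk1prop, hk2prop, ?_, hsum⟩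
    have hmod : θ ^ (pr.1 + pr.2) = θ ^ ((pr.1 + pr.2) % orderOf θ) :=
      (pow_mod_orderOf θ _).symm
    rw [hθ] at hmod
    have hval : (pr.1 + pr.2) % (q ^ 2 - 1) = c.val := by
      rw [← ZMod.val_natCast]
      congr 1
      push_cast
      exact hsum
    rw [← pow_add, hmod, hval]
  calc S.card ≤ 2 * (S.image (fun pr => (f pr.1, f pr.2))).card := by
        apply Finset.card_le_mul_card_image
        intro kk _
        by_contra hgt
        push_neg at hgt
        rw [Finset.two_lt_card_iff] at hgt
        obtain ⟨P1, P2, P3, hP1, hP2, hP3, h12, h13, h23⟩ := hgt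
        rw [Finset.mem_filter] at hP1 hP2 hP3
        obtain ⟨hP1S, hP1f⟩ := hP1
        obtain ⟨hP2S, hP2f⟩ := hP2
        obtain ⟨hP3S, hP3f⟩ := hP3
        have e11 : f P1.1 = kk.1 := congrArg Prod.fst hP1f
        have e12 : f P1.2 = kk.2 := congrArg Prod.snd hP1f
        have e21 : f P2.1 = kk.1 := congrArg Prod.fst hP2f
        have e22 : f P2.2 = kk.2 := congrArg Prod.snd hP2f
        have e31 : f P3.1 = kk.1 := congrArg Prod.fst hP3f
        have e32 : f P3.2 = kk.2 := congrArg Prod.snd hP3f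
        set k1 := kk.1
        set k2 := kk.2
        obtain ⟨ha1, hb1, hk1K, hk2K, hc1q1, hc2q1, hw1, hs1⟩ := key P1 hP1S
        obtain ⟨ha2, hb2, _, _, hc1q2, hc2q2, hw2, hs2⟩ := key P2 hP2S
        obtain ⟨ha3, hb3, _, _, hc1q3, hc2q3, hw3, hs3⟩ := key P3 hP3S
        rw [e11] at hc1q1 hk1K
        rw [e12] at hc2q1 hk2K
        rw [e21] at hc1q2
        rw [e22] at hc2q2
        rw [e31] at hc1q3
        rw [e32] at hc2q3
        obtain ⟨hk1q, hk1ne⟩ := hK k1 hk1K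
        obtain ⟨hk2q, hk2ne⟩ := hK k2 hk2K
        -- x_i and y_i
        set x1 := k2 * (θ ^ P1.1 - k1 * θ) with hx1
        set x2 := k2 * (θ ^ P2.1 - k1 * θ) with hx2
        set x3 := k2 * (θ ^ P3.1 - k1 * θ) with hx3
        set y1 := k1 * (θ ^ P1.2 - k2 * θ) with hy1
        set y2 := k1 * (θ ^ P2.2 - k2 * θ) with hy2
        set y3 := k1 * (θ ^ P3.2 - k2 * θ) with hy3
        have hfixu1 : (x1 + y1) ^ q = x1 + y1 :=
          fix_add p n q hp hn hq hF (fix_mul q hk2q hc1q1) (fix_mul q hk1q hc2q1)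
        have hfixu2 : (x2 + y2) ^ q = x2 + y2 :=
          fix_add p n q hp hn hq hF (fix_mul q hk2q hc1q2) (fix_mul q hk1q hc2q2)
        have hfixu3 : (x3 + y3) ^ q = x3 + y3 :=
          fix_add p n q hp hn hq hF (fix_mul q hk2q hc1q3) (fix_mul q hk1q hc2q3)
        have hfixv1 : ((θ ^ P1.1 - k1 * θ) * (θ ^ P1.2 - k2 * θ)) ^ q = _ :=
          fix_mul q hc1q1 hc2q1
        have hfixv2 : ((θ ^ P2.1 - k1 * θ) * (θ ^ P2.2 - k2 * θ)) ^ q = _ :=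
          fix_mul q hc1q2 hc2q2
        have hfixv3 : ((θ ^ P3.1 - k1 * θ) * (θ ^ P3.2 - k2 * θ)) ^ q = _ :=
          fix_mul q hc1q3 hc2q3
        -- pairwise basis equations
        have heq12 : (x1 + y1) * θ + (θ ^ P1.1 - k1 * θ) * (θ ^ P1.2 - k2 * θ) =
            (x2 + y2) * θ + (θ ^ P2.1 - k1 * θ) * (θ ^ P2.2 - k2 * θ) := by
          rw [hx1, hy1, hx2, hy2]
          linear_combination hw1 - hw2
        have heq13 : (x1 + y1) * θ + (θ ^ P1.1 - k1 * θ) * (θ ^ P1.2 - k2 * θ) =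
            (x3 + y3) * θ + (θ ^ P3.1 - k1 * θ) * (θ ^ P3.2 - k2 * θ) := by
          rw [hx1, hy1, hx3, hy3]
          linear_combination hw1 - hw3
        obtain ⟨hu12, hv12⟩ := basis_unique p n q hp hn hq hF hθq hfixu1 hfixv1 hfixu2 hfixv2 heq12
        obtain ⟨hu13, hv13⟩ := basis_unique p n q hp hn hq hF hθq hfixu1 hfixv1 hfixu3 hfixv3 heq13
        have hprod12 : x1 * y1 = x2 * y2 := by
          rw [hx1, hy1, hx2, hy2]
          linear_combination k1 * k2 * hv12
        have hprod13 : x1 * y1 = x3 * y3 := by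
          rw [hx1, hy1, hx3, hy3]
          linear_combination k1 * k2 * hv13
        -- injectivity : distinct pairs give distinct x's
        have hxinj : ∀ pr, pr ∈ S → ∀ pr', pr' ∈ S →
            k2 * (θ ^ pr.1 - k1 * θ) = k2 * (θ ^ pr'.1 - k1 * θ) → pr = pr' := by
          intro pr hpr pr' hpr' hx
          obtain ⟨hpa, hpb, _, _, _, _, _, hps⟩ := key pr hpr
          obtain ⟨hpa', hpb', _, _, _, _, _, hps'⟩ := key pr' hpr'
          have hc : θ ^ pr.1 - k1 * θ = θ ^ pr'.1 - k1 * θ := mul_left_cancel₀ hk2ne hx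
          have hθa : θ ^ pr.1 = θ ^ pr'.1 := by linear_combination hc
          have ha : pr.1 = pr'.1 := hinj _ hpa _ hpa' hθa
          have hbcast : ((pr.2 : ℕ) : ZMod (q ^ 2 - 1)) = ((pr'.2 : ℕ) : ZMod (q ^ 2 - 1)) := by
            have := hps.trans hps'.symm
            rw [ha] at this
            exact add_left_cancel this
          have hb : pr.2 = pr'.2 := cast_inj_Icc (q ^ 2 - 1) (by omega) _ hpb _ hpb' hbcast
          exact Prod.ext ha hb
        have hx12 : x1 ≠ x2 := fun h => h12 (hxinj P1 hP1S P2 hP2S h)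
        have hx13 : x1 ≠ x3 := fun h => h13 (hxinj P1 hP1S P3 hP3S h)
        have hx23 : x2 ≠ x3 := fun h => h23 (hxinj P2 hP2S P3 hP3S h)
        -- quadratic argument
        have hz12 : (x1 - x2) * (y1 - x2) = 0 := by linear_combination hprod12 - x2 * hu12
        have hz13 : (x1 - x3) * (y1 - x3) = 0 := by linear_combination hprod13 - x3 * hu13
        have hy12 : y1 = x2 := by
          rcases mul_eq_zero.mp hz12 with h | h
          · exact absurd (sub_eq_zero.mp h) hx12
          · exact sub_eq_zero.mp h
        have hy13 : y1 = x3 := by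
          rcases mul_eq_zero.mp hz13 with h | h
          · exact absurd (sub_eq_zero.mp h) hx13
          · exact sub_eq_zero.mp h
        exact hx23 (hy12 ▸ hy13)
    _ ≤ 2 * K.card ^ 2 := by
        apply Nat.mul_le_mul_left
        have hsub : S.image (fun pr => (f pr.1, f pr.2)) ⊆ K ×ˢ K := by
          intro kk hkk
          simp only [Finset.mem_image] at hkk
          obtain ⟨pr, hpr, rfl⟩ := hkk
          rw [hS, Finset.mem_filter, Finset.mem_product] at hpr
          exact Finset.mem_product.mpr ⟨(hfspec _ hpr.1.1).1, (hfspec _ hpr.1.2).1⟩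
        calc _ ≤ (K ×ˢ K).card := Finset.card_le_card hsub
          _ = K.card ^ 2 := by rw [Finset.card_product, sq]

lemma theta_surj (q : ℕ) (hq2 : 2 ≤ q) {F : Type*} [Field F] [Fintype F] [DecidableEq F]
    (hF : Fintype.card F = q ^ 2) {θ : F} (hθ : orderOf θ = q ^ 2 - 1) :
    ∀ x : F, x ≠ 0 → ∃ a ∈ Finset.Icc 1 (q ^ 2 - 1), θ ^ a = x := by
  have hq4 : 4 ≤ q ^ 2 := by nlinarith
  obtain ⟨hθm, hθ0, _⟩ := theta_basics q hq2 hθ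
  have hcardim : ((Finset.range (q ^ 2 - 1)).image (θ ^ ·)).card = q ^ 2 - 1 := by
    rw [Finset.card_image_of_injOn, Finset.card_range]
    intro a ha b hb hab
    refine pow_injOn_Iio_orderOf ?_ ?_ hab <;>
      simp only [Set.mem_Iio, hθ] <;>
      [exact Finset.mem_range.mp ha; exact Finset.mem_range.mp hb]
  have hsub : (Finset.range (q ^ 2 - 1)).image (θ ^ ·) ⊆ Finset.univ.erase 0 := by
    intro x hx
    simp only [Finset.mem_image] at hx
    obtain ⟨a, _, rfl⟩ := hx
    exact Finset.mem_erase.mpr ⟨pow_ne_zero _ hθ0, Finset.mem_univ _⟩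
  have hcard0 : (Finset.univ.erase (0 : F)).card = q ^ 2 - 1 := by
    rw [Finset.card_erase_of_mem (Finset.mem_univ _), Finset.card_univ, hF]
  have heq : (Finset.range (q ^ 2 - 1)).image (θ ^ ·) = Finset.univ.erase 0 :=
    Finset.eq_of_subset_of_card_le hsub (by rw [hcardim, hcard0])
  intro x hx
  have hmem : x ∈ Finset.univ.erase (0 : F) := Finset.mem_erase.mpr ⟨hx, Finset.mem_univ _⟩
  rw [← heq] at hmem
  simp only [Finset.mem_image, Finset.mem_range] at hmem
  obtain ⟨a, ha, hax⟩ := hmem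
  rcases Nat.eq_zero_or_pos a with rfl | hapos
  · exact ⟨q ^ 2 - 1, Finset.mem_Icc.mpr ⟨by omega, le_refl _⟩, by rw [hθm, ← hax, pow_zero]⟩
  · exact ⟨a, Finset.mem_Icc.mpr ⟨hapos, by omega⟩, hax⟩

lemma fixed_card (q : ℕ) (hq2 : 2 ≤ q) {F : Type*} [Field F] [Fintype F] [DecidableEq F]
    (hF : Fintype.card F = q ^ 2) {θ : F} (hθ : orderOf θ = q ^ 2 - 1) :
    (Finset.univ.filter (fun x : F => x ^ q = x)).card = q := by
  have hq4 : 4 ≤ q ^ 2 := by nlinarith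
  obtain ⟨hθm, hθ0, hθq⟩ := theta_basics q hq2 hθ
  have hsurj := theta_surj q hq2 hF hθ
  have hmfact : q ^ 2 - 1 = (q + 1) * (q - 1) := by
    obtain ⟨r, rfl⟩ : ∃ r, q = r + 1 := ⟨q - 1, by omega⟩
    refine Nat.sub_eq_of_eq_add ?_
    simp only [Nat.add_sub_cancel]
    ring
  set d := θ ^ (q + 1) with hd
  have hord : orderOf d = q - 1 := by
    rw [hd, orderOf_pow' θ (by omega : q + 1 ≠ 0), hθ, hmfact,
      Nat.gcd_eq_right ⟨q - 1, rfl⟩, Nat.mul_div_cancel_left _ (by omega : 0 < q + 1)]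
  have hd0 : d ≠ 0 := pow_ne_zero _ hθ0
  have hd1 : d ^ (q - 1) = 1 := by
    rw [hd, ← pow_mul, ← hmfact, hθm]
  have hdq : ∀ i, (d ^ i) ^ q = d ^ i := by
    intro i
    have h1 : (d ^ i) ^ (q - 1) = 1 := by rw [← pow_mul, mul_comm, pow_mul, hd1, one_pow]
    calc (d ^ i) ^ q = (d ^ i) ^ (q - 1) * d ^ i := by
          rw [← pow_succ]; congr 1; omega
      _ = d ^ i := by rw [h1, one_mul]
  have hset : Finset.univ.filter (fun x : F => x ^ q = x) =
      insert (0 : F) ((Finset.range (q - 1)).image (d ^ ·)) := by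
    ext x
    simp only [Finset.mem_filter, Finset.mem_univ, true_and, Finset.mem_insert,
      Finset.mem_image, Finset.mem_range]
    constructor
    · intro hx
      by_cases hx0 : x = 0
      · exact Or.inl hx0
      · right
        obtain ⟨a, haI, hax⟩ := hsurj x hx0
        have hx1 : x ^ (q - 1) = 1 := by
          have h1 : x ^ (q - 1) * x = 1 * x := by
            rw [← pow_succ, one_mul]
            calc x ^ (q - 1 + 1) = x ^ q := by congr 1; omega
              _ = x := hx
          exact mul_right_cancel₀ hx0 h1
        have h2 : θ ^ (a * (q - 1)) = 1 := by rw [pow_mul, hax, hx1]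
        have hdvd : (q + 1) * (q - 1) ∣ a * (q - 1) := by
          rw [← hmfact, ← hθ]; exact orderOf_dvd_of_pow_eq_one h2
        have hdvd2 : (q + 1) ∣ a :=
          (Nat.mul_dvd_mul_iff_right (show 0 < q - 1 by omega)).mp hdvd
        obtain ⟨i, hi⟩ := hdvd2
        refine ⟨i % (q - 1), Nat.mod_lt _ (by omega), ?_⟩
        have hdi : d ^ i = x := by rw [← hax, hi, hd, pow_mul]
        rw [← hdi, ← hord]
        exact pow_mod_orderOf d i
    · rintro (rfl | ⟨i, _, rfl⟩)
      · rw [zero_pow (by omega : q ≠ 0)]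
      · exact hdq i
  rw [hset, Finset.card_insert_of_notMem, Finset.card_image_of_injOn, Finset.card_range]
  · omega
  · intro a ha b hb hab
    refine pow_injOn_Iio_orderOf ?_ ?_ hab <;> simp only [Set.mem_Iio, hord] <;>
      [exact Finset.mem_range.mp ha; exact Finset.mem_range.mp hb]
  · simp only [Finset.mem_image, Finset.mem_range, not_exists]
    intro i hi
    exact pow_ne_zero _ hd0 hi.2

lemma bose_card (p n q : ℕ) (hp : p.Prime) (hn : 0 < n) (hq : q = p ^ n)
    (F : Type*) [Field F] [Fintype F] [DecidableEq F] (hF : Fintype.card F = q ^ 2)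
    (θ : F) (hθ : orderOf θ = q ^ 2 - 1)
    (K : Finset F) (hK : ∀ k ∈ K, k ^ q = k ∧ k ≠ 0)
    (U : Finset ℕ)
    (hUdef : U = K.biUnion fun k =>
      (Finset.Icc 1 (q ^ 2 - 1)).filter fun a => (θ ^ a - k * θ) ^ q = θ ^ a - k * θ) :
    U.card = K.card * q := by
  classical
  have hq2 : 2 ≤ q := by
    rw [hq]
    calc 2 ≤ p := hp.two_le
    _ ≤ p ^ n := Nat.le_self_pow (by omega) p
  have hq4 : 4 ≤ q ^ 2 := by nlinarith
  obtain ⟨hθm, hθ0, hθq⟩ := theta_basics q hq2 hθ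
  have hinj := theta_pow_inj q hq2 hθ
  have hsurj := theta_surj q hq2 hF hθ
  have fix0 : (0 : F) ^ q = 0 := zero_pow (by omega : q ≠ 0)
  rw [hUdef, Finset.card_biUnion]
  · have hBcard : ∀ k ∈ K,
        ((Finset.Icc 1 (q ^ 2 - 1)).filter
          fun a => (θ ^ a - k * θ) ^ q = θ ^ a - k * θ).card = q := by
      intro k hk
      obtain ⟨hkq, hkne⟩ := hK k hk
      have hbij : ((Finset.Icc 1 (q ^ 2 - 1)).filter
          fun a => (θ ^ a - k * θ) ^ q = θ ^ a - k * θ).card =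
          (Finset.univ.filter (fun x : F => x ^ q = x)).card := by
        apply Finset.card_bij (fun a _ => θ ^ a - k * θ)
        · intro a ha
          rw [Finset.mem_filter] at ha
          exact Finset.mem_filter.mpr ⟨Finset.mem_univ _, ha.2⟩
        · intro a ha b hb hab
          rw [Finset.mem_filter] at ha hb
          have : θ ^ a = θ ^ b := by linear_combination hab
          exact hinj _ ha.1 _ hb.1 this
        · intro r hr
          rw [Finset.mem_filter] at hr
          have hrq : r ^ q = r := hr.2
          have hne : k * θ + r ≠ 0 := by
            intro h0
            apply hθq
            have hθeq : θ = -r * k⁻¹ := by field_simp; linear_combination h0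
            have hfix : (-r * k⁻¹) ^ q = -r * k⁻¹ :=
              fix_mul q (by rw [show -r = 0 - r by ring]; exact fix_sub p n q hp hn hq hF fix0 hrq)
                (fix_inv q hkq)
            rw [← hθeq] at hfix
            exact hfix
          obtain ⟨a, haI, hax⟩ := hsurj _ hne
          have hval : θ ^ a - k * θ = r := by rw [hax]; ring
          exact ⟨a, Finset.mem_filter.mpr ⟨haI, by rw [hval]; exact hrq⟩, hval⟩
      rw [hbij]
      exact fixed_card q hq2 hF hθ
    rw [Finset.sum_congr rfl hBcard, Finset.sum_const, smul_eq_mul]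
  · intro k hk k' hk' hne
    simp only [Finset.disjoint_left, Finset.mem_filter]
    rintro a ⟨haI, hA⟩ ⟨_, hB⟩
    obtain ⟨hkq, _⟩ := hK k hk
    obtain ⟨hkq', _⟩ := hK k' hk'
    have hkk : k - k' ≠ 0 := sub_ne_zero.mpr hne
    apply hθq
    have hθeq : θ = ((θ ^ a - k' * θ) - (θ ^ a - k * θ)) * (k - k')⁻¹ := by
      field_simp
      ring
    have hfix : (((θ ^ a - k' * θ) - (θ ^ a - k * θ)) * (k - k')⁻¹) ^ q =
        ((θ ^ a - k' * θ) - (θ ^ a - k * θ)) * (k - k')⁻¹ :=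
      fix_mul q (fix_sub p n q hp hn hq hF hB hA)
        (fix_inv q (fix_sub p n q hp hn hq hF hkq hkq'))
    rw [← hθeq] at hfix
    exact hfix

/-- Number of ordered representations of `k` as a sum of two elements of `A ⊆ ℤ/nℤ`. -/
def repCountZ {n : ℕ} (A : Finset (ZMod n)) (k : ZMod n) : ℕ :=
  ((A ×ˢ A).filter fun p => p.1 + p.2 = k).card

/-- `C₂ g n` : the largest cardinality of a `B₂*[g]` set in `ℤ/nℤ`. -/
noncomputable def C2 (g n : ℕ) : ℕ :=
  sSup {r : ℕ | ∃ A : Finset (ZMod n), (∀ k, repCountZ A k ≤ g) ∧ A.card = r}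

theorem bose_union_construction (p n q : ℕ) (hp : p.Prime) (hn : 0 < n) (hq : q = p ^ n)
    (F : Type*) [Field F] [Fintype F] [DecidableEq F] (hF : Fintype.card F = q ^ 2)
    (θ : F) (hθ : orderOf θ = q ^ 2 - 1)
    (K : Finset F) (hK : ∀ k ∈ K, k ^ q = k ∧ k ≠ 0)
    (U : Finset ℕ)
    (hUdef : U = K.biUnion fun k =>
      (Finset.Icc 1 (q ^ 2 - 1)).filter fun a => (θ ^ a - k * θ) ^ q = θ ^ a - k * θ) :
    (∀ c : ZMod (q ^ 2 - 1),
      ((U ×ˢ U).filter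
        (fun pr => ((pr.1 : ZMod (q ^ 2 - 1)) + (pr.2 : ZMod (q ^ 2 - 1)) = c))).card ≤
        2 * K.card ^ 2) ∧
    ∀ j : ℕ, j ≤ q - 1 → j * q ≤ C2 (2 * j ^ 2) (q ^ 2 - 1) := by
  classical
  constructor
  · exact fun c => bose_B2 p n q hp hn hq F hF θ hθ K hK U hUdef c
  · intro j hj
    have hq2 : 2 ≤ q := by
      rw [hq]
      calc 2 ≤ p := hp.two_le
      _ ≤ p ^ n := Nat.le_self_pow (by omega) p
    have hq4 : 4 ≤ q ^ 2 := by nlinarith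
    obtain ⟨hθm, hθ0, hθq⟩ := theta_basics q hq2 hθ
    haveI : NeZero (q ^ 2 - 1) := ⟨by omega⟩
    have hmfact : q ^ 2 - 1 = (q + 1) * (q - 1) := by
      obtain ⟨r, rfl⟩ : ∃ r, q = r + 1 := ⟨q - 1, by omega⟩
      refine Nat.sub_eq_of_eq_add ?_
      simp only [Nat.add_sub_cancel]
      ring
    set d := θ ^ (q + 1) with hd
    have hord : orderOf d = q - 1 := by
      rw [hd, orderOf_pow' θ (by omega : q + 1 ≠ 0), hθ, hmfact,
        Nat.gcd_eq_right ⟨q - 1, rfl⟩, Nat.mul_div_cancel_left _ (by omega : 0 < q + 1)]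
    have hd0 : d ≠ 0 := pow_ne_zero _ hθ0
    have hd1 : d ^ (q - 1) = 1 := by rw [hd, ← pow_mul, ← hmfact, hθm]
    have hdq : ∀ i, (d ^ i) ^ q = d ^ i := by
      intro i
      have h1 : (d ^ i) ^ (q - 1) = 1 := by rw [← pow_mul, mul_comm, pow_mul, hd1, one_pow]
      calc (d ^ i) ^ q = (d ^ i) ^ (q - 1) * d ^ i := by
            rw [← pow_succ]; congr 1; omega
        _ = d ^ i := by rw [h1, one_mul]
    set K' := (Finset.range j).image (d ^ ·) with hK'
    have hK'card : K'.card = j := by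
      rw [hK', Finset.card_image_of_injOn, Finset.card_range]
      intro a ha b hb hab
      refine pow_injOn_Iio_orderOf ?_ ?_ hab <;> simp only [Set.mem_Iio, hord] <;>
        [exact lt_of_lt_of_le (Finset.mem_range.mp ha) hj;
         exact lt_of_lt_of_le (Finset.mem_range.mp hb) hj]
    have hK'prop : ∀ k ∈ K', k ^ q = k ∧ k ≠ 0 := by
      intro k hk
      rw [hK'] at hk
      simp only [Finset.mem_image, Finset.mem_range] at hk
      obtain ⟨i, _, rfl⟩ := hk
      exact ⟨hdq i, pow_ne_zero _ hd0⟩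
    set U' := K'.biUnion (fun k =>
      (Finset.Icc 1 (q ^ 2 - 1)).filter fun a => (θ ^ a - k * θ) ^ q = θ ^ a - k * θ) with hU'
    have hB2 := fun c => bose_B2 p n q hp hn hq F hF θ hθ K' hK'prop U' hU' c
    have hUcard := bose_card p n q hp hn hq F hF θ hθ K' hK'prop U' hU'
    have hU'Icc : ∀ a ∈ U', a ∈ Finset.Icc 1 (q ^ 2 - 1) := by
      intro a ha
      rw [hU'] at ha
      simp only [Finset.mem_biUnion, Finset.mem_filter] at ha
      obtain ⟨k, _, h, _⟩ := ha
      exact h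
    set A := U'.image (Nat.cast : ℕ → ZMod (q ^ 2 - 1)) with hA
    have hAcard : A.card = j * q := by
      rw [hA, Finset.card_image_of_injOn, hUcard, hK'card]
      intro a ha b hb hab
      exact cast_inj_Icc _ (by omega) _ (hU'Icc _ ha) _ (hU'Icc _ hb) hab
    have hrep : ∀ c, repCountZ A c ≤ 2 * j ^ 2 := by
      intro c
      have hsurjon : ((A ×ˢ A).filter fun pr2 => pr2.1 + pr2.2 = c).card ≤
          ((U' ×ˢ U').filter fun pr =>
            ((pr.1 : ZMod (q ^ 2 - 1)) + (pr.2 : ZMod (q ^ 2 - 1)) = c)).card := by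
        apply Finset.card_le_card_of_surjOn
          (fun pr => ((pr.1 : ZMod (q ^ 2 - 1)), (pr.2 : ZMod (q ^ 2 - 1))))
        intro z hz
        simp only [Finset.coe_filter, Finset.mem_product, Set.mem_setOf_eq] at hz
        obtain ⟨⟨hz1, hz2⟩, hzsum⟩ := hz
        rw [hA] at hz1 hz2
        simp only [Finset.mem_image] at hz1 hz2
        obtain ⟨a, ha, hacast⟩ := hz1
        obtain ⟨b, hb, hbcast⟩ := hz2
        refine ⟨(a, b), ?_, ?_⟩
        · simp only [Finset.coe_filter, Finset.mem_product, Set.mem_setOf_eq]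
          exact ⟨⟨ha, hb⟩, by rw [hacast, hbcast, hzsum]⟩
        · simp only [hacast, hbcast]
      calc repCountZ A c ≤ _ := hsurjon
        _ ≤ 2 * K'.card ^ 2 := hB2 c
        _ = 2 * j ^ 2 := by rw [hK'card]
    apply le_csSup
    · refine ⟨Fintype.card (ZMod (q ^ 2 - 1)), ?_⟩
      rintro r ⟨B, _, rfl⟩
      exact Finset.card_le_univ B
    · rw [← hAcard]
      exact ⟨A, hrep, rfl⟩
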